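/- Let D be a finitely generated abelian group and S a D-graded commutative ring which is an integral domain and which possesses a homogeneous unit of degree d for every d ∈ D. Then the shear map ψ: S ⊗_{S_0} S → S[D] is bijective, where S[D] denotes the group algebra AddMonoidAlgebra S D and ψ is the S_0-linear map induced by the S_0-bilinear map (g, h) ↦ Σ_{d∈D} (g_d·h)·χ^d (so that for homogeneous g, ψ(g ⊗ h) = (g·h)·χ^{deg g}). -/

import Mathlib

open scoped TensorProduct

variable {D S : Type*} [AddCommGroup D] [AddGroup.FG D] [DecidableEq D] [CommRing S]
variable (𝒜 : D → AddSubgroup S) [GradedRing 𝒜]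

/-- The inclusion of the degree-zero subring `S_0 = 𝒜 0` into `S`, as a ring homomorphism. -/
def gradeZeroInclusion : (𝒜 0) →+* S where
  toFun := Subtype.val
  map_one' := rfl
  map_mul' _ _ := rfl
  map_zero' := rfl
  map_add' _ _ := rfl

/-- `S` is an algebra over its degree-zero subring `S_0 = 𝒜 0`. -/
noncomputable instance : Algebra (𝒜 0) S := (gradeZeroInclusion 𝒜).toAlgebra

/-!
Choose a homogeneous unit `u_d` of each degree `d`. The inverse of the shear map sends
`s χ^d` to `u_d ⊗ u_d⁻¹ s`. The inverse of a homogeneous unit of degree `d` is homogeneous of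
degree `-d`, so for `g` homogeneous of degree `d` the element `u_d⁻¹ g` has degree `0` and can be
moved across the tensor sign: `u_d ⊗ u_d⁻¹ g h = g ⊗ h`. Since `S` is spanned by homogeneous
elements, this makes the map a two-sided inverse.
-/

section HomogeneousUnits

variable {ι A σ : Type*} [AddGroup ι] [DecidableEq ι] [Semiring A] [SetLike σ A]
  [AddSubmonoidClass σ A] (ℬ : ι → σ) [GradedRing ℬ]

theorem Units.inv_mem_grade_neg {d : ι} {u : Aˣ} (hu : (u : A) ∈ ℬ d) :
    (↑u⁻¹ : A) ∈ ℬ (-d) := by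
  have h : (u : A) * (DirectSum.decompose ℬ (↑u⁻¹ : A) (-d) : A) = 1 := by
    rw [← DirectSum.coe_decompose_mul_add_of_left_mem ℬ hu, Units.mul_inv, add_neg_cancel,
      DirectSum.decompose_of_mem_same ℬ SetLike.GradedOne.one_mem]
  exact Units.inv_eq_of_mul_eq_one_right h ▸ SetLike.coe_mem _

theorem Units.inv_mul_mem_grade_zero {d : ι} {u : Aˣ} (hu : (u : A) ∈ ℬ d) {g : A}
    (hg : g ∈ ℬ d) : (↑u⁻¹ : A) * g ∈ ℬ 0 :=
  neg_add_cancel d ▸ SetLike.GradedMul.mul_mem (Units.inv_mem_grade_neg ℬ hu) hg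

end HomogeneousUnits

section ShearInverse

variable {ι R : Type*} [AddCommGroup ι] [DecidableEq ι] [CommRing R]
  (ℬ : ι → AddSubgroup R) [GradedRing ℬ] (u : ι → Rˣ)

noncomputable def shearInverse : AddMonoidAlgebra R ι →+ R ⊗[ℬ 0] R :=
  (Finsupp.liftAddHom fun d => (TensorProduct.mk (ℬ 0) R R (u d)).toAddMonoidHom.comp
    (AddMonoidHom.mulLeft (↑(u d)⁻¹ : R))).comp AddMonoidAlgebra.coeffAddEquiv.toAddMonoidHom

theorem shearInverse_single (d : ι) (s : R) :
    shearInverse ℬ u (AddMonoidAlgebra.single d s) = (u d : R) ⊗ₜ ((↑(u d)⁻¹ : R) * s) :=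
  Finsupp.liftAddHom_apply_single _ d s

variable {ℬ u}

theorem shearInverse_single_mul (hu : ∀ d, (u d : R) ∈ ℬ d) {d : ι} {g : R} (hg : g ∈ ℬ d)
    (h : R) : shearInverse ℬ u (AddMonoidAlgebra.single d (g * h)) = g ⊗ₜ h := by
  set c : ℬ 0 := ⟨_, Units.inv_mul_mem_grade_zero ℬ (hu d) hg⟩
  have hch : (↑(u d)⁻¹ : R) * (g * h) = c • h := by
    rw [Algebra.smul_def, ← mul_assoc]
    rfl
  have hcu : c • (u d : R) = g := by
    rw [Algebra.smul_def]
    exact (mul_comm _ _).trans (Units.mul_inv_cancel_left (u d) g)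
  rw [shearInverse_single, hch, ← hcu]
  exact (TensorProduct.smul_tmul c (u d : R) h).symm

theorem shearInverse_leftInverse (hu : ∀ d, (u d : R) ∈ ℬ d)
    {ψ : R ⊗[ℬ 0] R →ₗ[ℬ 0] AddMonoidAlgebra R ι}
    (hψ : ∀ (d : ι) (g : R), g ∈ ℬ d → ∀ h : R, ψ (g ⊗ₜ h) = AddMonoidAlgebra.single d (g * h)) :
    Function.LeftInverse (shearInverse ℬ u) ψ := by
  intro x
  induction x using TensorProduct.induction_on with
  | zero => rw [map_zero, map_zero]
  | add x y hx hy => rw [map_add, map_add, hx, hy]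
  | tmul g h =>
    induction g using DirectSum.Decomposition.inductionOn ℬ with
    | zero => rw [TensorProduct.zero_tmul, map_zero, map_zero]
    | homogeneous g => rw [hψ _ _ g.2, shearInverse_single_mul hu g.2]
    | add g g' hg hg' => rw [TensorProduct.add_tmul, map_add, map_add, hg, hg']

theorem shearInverse_rightInverse (hu : ∀ d, (u d : R) ∈ ℬ d)
    {ψ : R ⊗[ℬ 0] R →ₗ[ℬ 0] AddMonoidAlgebra R ι}
    (hψ : ∀ (d : ι) (g : R), g ∈ ℬ d → ∀ h : R, ψ (g ⊗ₜ h) = AddMonoidAlgebra.single d (g * h)) :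
    Function.RightInverse (shearInverse ℬ u) ψ := by
  intro f
  induction f using AddMonoidAlgebra.induction_linear with
  | zero => rw [map_zero, map_zero]
  | add f f' hf hf' => rw [map_add, map_add, hf, hf']
  | single d s => rw [shearInverse_single, hψ d _ (hu d), Units.mul_inv_cancel_left]

end ShearInverse

theorem stmt_9
    (hunits : ∀ d : D, ∃ u : Sˣ, (u : S) ∈ 𝒜 d)
    (ψ : S ⊗[𝒜 0] S →ₗ[𝒜 0] AddMonoidAlgebra S D)
    (hψ : ∀ (d : D) (g : S), g ∈ 𝒜 d → ∀ h : S,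
      ψ (g ⊗ₜ h) = AddMonoidAlgebra.single d (g * h)) :
    Function.Bijective ψ := by
  choose u hu using hunits
  exact ⟨(shearInverse_leftInverse hu hψ).injective,
    (shearInverse_rightInverse hu hψ).surjective⟩
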